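/- Equivariance of the model: Let R ∈ SO(3), a₃ = Rᵀe₃, let h be the invariant feature map and φ(x) the polar angle (in the frame defined by R) of the projection of Δp onto (span a₃)⊥, and let f: ℝ⁶ → ℝ² be arbitrary. Define F(Δp, v^A, v^B) = Rᵀ ( f(h(x))₁ · (cos φ(x), sin φ(x)), f(h(x))₂ ). Then for every H ∈ SO(3) with H a₃ = a₃ (and such that P Δp ≠ 0, P v^B ≠ 0), F(H Δp, v^A, H v^B) = H · F(Δp, v^A, v^B). -/

import Mathlib

open Matrix RealInnerProductSpace

noncomputable section

abbrev E3 := EuclideanSpace ℝ (Fin 3)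

/-- membership in SO(3): orthogonal with determinant one -/
def SO3 (M : Matrix (Fin 3) (Fin 3) ℝ) : Prop := Mᵀ * M = 1 ∧ M.det = 1

/-- action of a matrix on a vector -/
def mulv (M : Matrix (Fin 3) (Fin 3) ℝ) (w : E3) : E3 := WithLp.toLp 2 (M.mulVec w)

def e3 : E3 := WithLp.toLp 2 (![0, 0, 1] : Fin 3 → ℝ)

/-- orthogonal projection onto the line spanned by `a` -/
def projL (a : E3) (w : E3) : E3 := (Submodule.orthogonalProjectionOnto (ℝ ∙ a) w : E3)

/-- orthogonal projection onto the orthogonal complement of `a` -/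
def projP (a : E3) (w : E3) : E3 := (Submodule.orthogonalProjectionOnto (ℝ ∙ a)ᗮ w : E3)

/-- rotation about the axis `e₃` by angle `ω` -/
def Om (ω : ℝ) : Matrix (Fin 3) (Fin 3) ℝ :=
  !![Real.cos ω, -Real.sin ω, 0; Real.sin ω, Real.cos ω, 0; 0, 0, 1]

/-- the invariant feature map `h` of the equivariant downwash model, with respect to the
frame of the leader given by `R` (axis `a₃ = Rᵀe₃`) -/
def feat (R : Matrix (Fin 3) (Fin 3) ℝ) (dp vA vB : E3) : Fin 6 → ℝ :=
  ![⟪projP (mulv Rᵀ e3) dp, projP (mulv Rᵀ e3) vB⟫ /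
      (‖projP (mulv Rᵀ e3) dp‖ * ‖projP (mulv Rᵀ e3) vB‖),
    ‖projP (mulv Rᵀ e3) dp‖, ‖projP (mulv Rᵀ e3) vB‖,
    mulv R dp 2, mulv R vB 2, ‖projP (mulv Rᵀ e3) vA‖]


lemma inner_mulv (M : Matrix (Fin 3) (Fin 3) ℝ) (hM : Mᵀ * M = 1) (x y : E3) :
    ⟪mulv M x, mulv M y⟫ = ⟪x, y⟫ := by
  have : (M.mulVec x) ⬝ᵥ (M.mulVec y) = x ⬝ᵥ y := by
    rw [Matrix.dotProduct_mulVec, ← Matrix.mulVec_transpose, Matrix.mulVec_mulVec, hM,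
      Matrix.one_mulVec]
  simpa [mulv, PiLp.inner_apply, RCLike.inner_apply, conj_trivial, dotProduct, mul_comm] using this

lemma norm_mulv (M : Matrix (Fin 3) (Fin 3) ℝ) (hM : Mᵀ * M = 1) (x : E3) :
    ‖mulv M x‖ = ‖x‖ := by
  have h := inner_mulv M hM x x
  rw [real_inner_self_eq_norm_sq, real_inner_self_eq_norm_sq] at h
  nlinarith [norm_nonneg (mulv M x), norm_nonneg x]

lemma projP_eq (a : E3) (ha : ‖a‖ = 1) (w : E3) :
    projP a w = w - ⟪a, w⟫ • a := by
  show (ℝ ∙ a)ᗮ.starProjection w = _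
  rw [Submodule.starProjection_orthogonal_val, Submodule.starProjection_unit_singleton ℝ ha]

lemma comp2_eq (R : Matrix (Fin 3) (Fin 3) ℝ) (w : E3) :
    mulv R w 2 = ⟪mulv Rᵀ e3, w⟫ := by
  simp only [mulv, PiLp.inner_apply, RCLike.inner_apply, conj_trivial, Matrix.mulVec,
    dotProduct, Fin.sum_univ_three, Matrix.transpose_apply, e3]
  simp
  ring

/-- Equivariance of the model: with `F(x) = Rᵀ (f(h(x))₁ · (cos φ(x), sin φ(x)), f(h(x))₂)`,
for any `H ∈ SO(3)` fixing `a₃ = Rᵀe₃` we have `F(HΔp, vᴬ, Hvᴮ) = H F(Δp, vᴬ, vᴮ)`.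
The polar angles `φ₁` of the lateral part of `RΔp` and `φ₂` of the lateral part of `R(HΔp)`
are characterized via their cosine and sine. -/
theorem stmt13 (R : Matrix (Fin 3) (Fin 3) ℝ) (hR : SO3 R)
    (f : (Fin 6 → ℝ) → Fin 2 → ℝ)
    (dp vA vB : E3) (hdp : projP (mulv Rᵀ e3) dp ≠ 0) (hvB : projP (mulv Rᵀ e3) vB ≠ 0)
    (H : Matrix (Fin 3) (Fin 3) ℝ) (hH : SO3 H) (hfix : mulv H (mulv Rᵀ e3) = mulv Rᵀ e3)
    (φ₁ φ₂ : ℝ)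
    (hφ₁c : Real.cos φ₁ = mulv R dp 0 / ‖projP (mulv Rᵀ e3) dp‖)
    (hφ₁s : Real.sin φ₁ = mulv R dp 1 / ‖projP (mulv Rᵀ e3) dp‖)
    (hφ₂c : Real.cos φ₂ = mulv R (mulv H dp) 0 / ‖projP (mulv Rᵀ e3) (mulv H dp)‖)
    (hφ₂s : Real.sin φ₂ = mulv R (mulv H dp) 1 / ‖projP (mulv Rᵀ e3) (mulv H dp)‖) :
    mulv Rᵀ (WithLp.toLp 2 ![f (feat R (mulv H dp) vA (mulv H vB)) 0 * Real.cos φ₂,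
              f (feat R (mulv H dp) vA (mulv H vB)) 0 * Real.sin φ₂,
              f (feat R (mulv H dp) vA (mulv H vB)) 1]) =
      mulv H (mulv Rᵀ (WithLp.toLp 2 ![f (feat R dp vA vB) 0 * Real.cos φ₁,
                        f (feat R dp vA vB) 0 * Real.sin φ₁,
                        f (feat R dp vA vB) 1])) := by
  obtain ⟨hR1, -⟩ := hR
  obtain ⟨hH1, -⟩ := hH
  have hRR : R * Rᵀ = 1 := mul_eq_one_comm.mp hR1
  have hRT : Rᵀᵀ * Rᵀ = 1 := by rwa [Matrix.transpose_transpose]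
  set a : E3 := mulv Rᵀ e3 with ha_def
  have ha : ‖a‖ = 1 := by
    rw [ha_def, norm_mulv Rᵀ hRT e3]
    simp [e3, EuclideanSpace.norm_eq, Fin.sum_univ_three]
  have hinner : ∀ w : E3, ⟪a, mulv H w⟫ = ⟪a, w⟫ := by
    intro w
    conv_lhs => rw [← hfix]
    exact inner_mulv H hH1 a w
  have hPmul : ∀ w : E3, projP a (mulv H w) = mulv H (projP a w) := by
    intro w
    rw [projP_eq a ha, projP_eq a ha, hinner]
    have hlin : mulv H (w - ⟪a, w⟫ • a) = mulv H w - ⟪a, w⟫ • mulv H a := by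
      ext i
      simp only [mulv, Matrix.mulVec, dotProduct, Fin.sum_univ_three, PiLp.sub_apply,
        PiLp.smul_apply, smul_eq_mul, WithLp.ofLp_sub, WithLp.ofLp_smul,
        Pi.sub_apply, Pi.smul_apply]
      ring
    rw [hlin, hfix]
  -- invariance of features
  have hfeat : feat R (mulv H dp) vA (mulv H vB) = feat R dp vA vB := by
    have h1 := hPmul dp
    have h2 := hPmul vB
    funext i
    fin_cases i <;>
      simp [feat, ← ha_def, h1, h2, inner_mulv H hH1, norm_mulv H hH1, comp2_eq, hinner]
  rw [hfeat]
  set c : ℝ := f (feat R dp vA vB) 0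
  set d : ℝ := f (feat R dp vA vB) 1
  set G : Matrix (Fin 3) (Fin 3) ℝ := R * H * Rᵀ with hG_def
  have hGR : G * R = R * H := by
    rw [hG_def, Matrix.mul_assoc, hR1, Matrix.mul_one]
  have hG1 : Gᵀ * G = 1 := by
    have h : Gᵀ * G = R * (Hᵀ * ((Rᵀ * R) * (H * Rᵀ))) := by
      simp [hG_def, Matrix.transpose_mul, Matrix.mul_assoc]
    rw [h, hR1, Matrix.one_mul, ← Matrix.mul_assoc Hᵀ, hH1, Matrix.one_mul, hRR]
  have hGe : mulv G e3 = e3 := by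
    have h1 : mulv G e3 = mulv R (mulv H (mulv Rᵀ e3)) := by
      simp [hG_def, mulv, Matrix.mulVec_mulVec, Matrix.mul_assoc]
    rw [h1, hfix]
    simp [ha_def, mulv, Matrix.mulVec_mulVec, hRR, Matrix.one_mulVec]
  have hGTe : mulv Gᵀ e3 = e3 := by
    conv_lhs => rw [← hGe]
    simp [mulv, Matrix.mulVec_mulVec, hG1, Matrix.one_mulVec]
  have hG02 : G 0 2 = 0 := by
    have := congrArg (fun v : E3 => v 0) hGe
    simpa [mulv, Matrix.mulVec, dotProduct, e3, Fin.sum_univ_three] using this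
  have hG12 : G 1 2 = 0 := by
    have := congrArg (fun v : E3 => v 1) hGe
    simpa [mulv, Matrix.mulVec, dotProduct, e3, Fin.sum_univ_three] using this
  have hG22 : G 2 2 = 1 := by
    have := congrArg (fun v : E3 => v 2) hGe
    simpa [mulv, Matrix.mulVec, dotProduct, e3, Fin.sum_univ_three] using this
  have hG20 : G 2 0 = 0 := by
    have := congrArg (fun v : E3 => v 0) hGTe
    simpa [mulv, Matrix.mulVec, dotProduct, e3, Fin.sum_univ_three] using this
  have hG21 : G 2 1 = 0 := by
    have := congrArg (fun v : E3 => v 1) hGTe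
    simpa [mulv, Matrix.mulVec, dotProduct, e3, Fin.sum_univ_three] using this
  -- R (H dp) = G (R dp)
  have hRH : mulv R (mulv H dp) = mulv G (mulv R dp) := by
    simp [mulv, Matrix.mulVec_mulVec, hGR]
  have hn : ‖projP a (mulv H dp)‖ = ‖projP a dp‖ := by
    rw [hPmul dp, norm_mulv H hH1]
  have hne : ‖projP a dp‖ ≠ 0 := norm_ne_zero_iff.mpr hdp
  rw [hn] at hφ₂c hφ₂s
  have e0 : mulv R (mulv H dp) 0 = G 0 0 * mulv R dp 0 + G 0 1 * mulv R dp 1 := by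
    rw [hRH]
    show (G.mulVec (mulv R dp)) 0 = _
    simp [Matrix.mulVec, dotProduct, Fin.sum_univ_three, hG02]
  have e1 : mulv R (mulv H dp) 1 = G 1 0 * mulv R dp 0 + G 1 1 * mulv R dp 1 := by
    rw [hRH]
    show (G.mulVec (mulv R dp)) 1 = _
    simp [Matrix.mulVec, dotProduct, Fin.sum_univ_three, hG12]
  -- key identity
  have key : (WithLp.toLp 2 ![c * Real.cos φ₂, c * Real.sin φ₂, d] : E3) =
      mulv G (WithLp.toLp 2 ![c * Real.cos φ₁, c * Real.sin φ₁, d]) := by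
    ext i
    fin_cases i
    · show c * Real.cos φ₂ = (G.mulVec _) 0
      simp only [Matrix.mulVec, dotProduct, Fin.sum_univ_three, Matrix.cons_val_zero,
        Matrix.cons_val_one, Matrix.head_cons, Matrix.cons_val_two, Matrix.tail_cons,
        hφ₂c, hφ₁c, hφ₁s, e0, hG02]
      field_simp
      ring
    · show c * Real.sin φ₂ = (G.mulVec _) 1
      simp only [Matrix.mulVec, dotProduct, Fin.sum_univ_three, Matrix.cons_val_zero,
        Matrix.cons_val_one, Matrix.head_cons, Matrix.cons_val_two, Matrix.tail_cons,
        hφ₂s, hφ₁c, hφ₁s, e1, hG12]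
      field_simp
      ring
    · show d = (G.mulVec _) 2
      simp only [Matrix.mulVec, dotProduct, Fin.sum_univ_three, Matrix.cons_val_zero,
        Matrix.cons_val_one, Matrix.head_cons, Matrix.cons_val_two, Matrix.tail_cons,
        hG20, hG21, hG22]
      ring
  rw [key]
  have hRTG : Rᵀ * G = H * Rᵀ := by
    rw [hG_def, ← Matrix.mul_assoc, ← Matrix.mul_assoc, hR1, Matrix.one_mul]
  show WithLp.toLp 2 ((Rᵀ).mulVec (G.mulVec _)) = WithLp.toLp 2 (H.mulVec ((Rᵀ).mulVec _))
  rw [Matrix.mulVec_mulVec, Matrix.mulVec_mulVec, hRTG]
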